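/- Let ρ be a d×d complex matrix and A_1, …, A_n be d×d complex matrices. On ℂ^d ⊗ ℂ^n define P_i = 1 ⊗ |i⟩⟨i| and M = ∑_{k,l=1}^n (A_k ρ A_l†) ⊗ |k⟩⟨l|. Then for all i ≠ j: P_i M P_j = (A_i ρ A_j†) ⊗ |i⟩⟨j| and ‖ P_i M P_j ‖₁ = ‖ A_i ρ A_j† ‖₁. Consequently ∑_{i≠j} ‖P_i M P_j‖₁ = ∑_{i≠j} ‖A_i ρ A_j†‖₁, i.e., the ℓ₁-norm of POVM-based coherence evaluated on the canonical Naimark extension admits the local expression C_{ℓ₁}(ρ,E) = ∑_{i≠j} ‖A_i ρ A_j†‖₁. -/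

import Mathlib

open Matrix Kronecker
open scoped ComplexOrder

/-- The positive semidefinite square root of a positive semidefinite matrix, as
`Matrix.PosSemidef.sqrt` was defined in the older Mathlib (since removed). -/
noncomputable def posSemidefSqrtOld {n : Type*} [Fintype n] [DecidableEq n]
    {A : Matrix n n ℂ} (hA : A.PosSemidef) : Matrix n n ℂ :=
  (hA.1.eigenvectorUnitary : Matrix n n ℂ) *
    diagonal (fun i => ((Real.sqrt (hA.1.eigenvalues i) : ℝ) : ℂ)) *
    (star hA.1.eigenvectorUnitary : Matrix n n ℂ)

/-- The trace norm `‖A‖₁ = tr √(Aᴴ A)` of a complex matrix. -/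
noncomputable def traceNorm {m n : Type*} [Fintype m] [Fintype n] [DecidableEq n]
    (A : Matrix m n ℂ) : ℝ :=
  (posSemidefSqrtOld (Matrix.posSemidef_conjTranspose_mul_self A)).trace.re

/-! Compressing the Naimark embedding by `1 ⊗ |i⟩⟨i|` on the left and `1 ⊗ |j⟩⟨j|` on the
right keeps exactly the block `A i ρ A jᴴ ⊗ |i⟩⟨j|`. The trace norm is multiplicative on
Kronecker products, since `√((X ⊗ Y)ᴴ (X ⊗ Y)) = √(XᴴX) ⊗ √(YᴴY)` by uniqueness of positive
square roots, and the matrix unit `|i⟩⟨j|` has trace norm `1`. -/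

section
open scoped MatrixOrder

variable {m n p q : Type*} [Fintype m] [Fintype n] [Fintype p] [Fintype q]

lemma posSemidefSqrtOld_eq_sqrt [DecidableEq n] {A : Matrix n n ℂ} (hA : A.PosSemidef) :
    posSemidefSqrtOld hA = CFC.sqrt A := by
  rw [CFC.sqrt_eq_cfc, cfc_nnreal_eq_real _ A, hA.1.cfc_eq, IsHermitian.cfc, posSemidefSqrtOld]
  congr 3
  funext i
  simp [Real.coe_sqrt, Real.coe_toNNReal', max_eq_left (hA.eigenvalues_nonneg i)]

lemma traceNorm_eq_re_trace_sqrt [DecidableEq n] (A : Matrix m n ℂ) :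
    traceNorm A = (CFC.sqrt (Aᴴ * A)).trace.re := by
  rw [traceNorm, posSemidefSqrtOld_eq_sqrt]

lemma CFC.im_trace_sqrt [DecidableEq n] (S : Matrix n n ℂ) : (CFC.sqrt S).trace.im = 0 :=
  (Complex.nonneg_iff.mp (CFC.sqrt_nonneg S).posSemidef.trace_nonneg).2.symm

lemma CFC.sqrt_kronecker [DecidableEq m] [DecidableEq p] {A : Matrix m m ℂ} {B : Matrix p p ℂ}
    (hA : A.PosSemidef) (hB : B.PosSemidef) :
    CFC.sqrt (A ⊗ₖ B) = CFC.sqrt A ⊗ₖ CFC.sqrt B :=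
  CFC.sqrt_unique
    (by rw [← mul_kronecker_mul, CFC.sqrt_mul_sqrt_self A hA.nonneg,
      CFC.sqrt_mul_sqrt_self B hB.nonneg])
    ((CFC.sqrt_nonneg A).posSemidef.kronecker (CFC.sqrt_nonneg B).posSemidef).nonneg

lemma traceNorm_kronecker [DecidableEq n] [DecidableEq q] (X : Matrix m n ℂ) (Y : Matrix p q ℂ) :
    traceNorm (X ⊗ₖ Y) = traceNorm X * traceNorm Y := by
  rw [traceNorm_eq_re_trace_sqrt, traceNorm_eq_re_trace_sqrt, traceNorm_eq_re_trace_sqrt,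
    conjTranspose_kronecker, ← mul_kronecker_mul,
    CFC.sqrt_kronecker (posSemidef_conjTranspose_mul_self X) (posSemidef_conjTranspose_mul_self Y),
    trace_kronecker, Complex.mul_re, CFC.im_trace_sqrt, zero_mul, sub_zero]

lemma traceNorm_single_one [DecidableEq p] [DecidableEq q] (i : p) (j : q) :
    traceNorm (single i j (1 : ℂ)) = 1 := by
  have h_idem : single j j (1 : ℂ) * single j j 1 = single j j 1 := by simp
  have h_nonneg : 0 ≤ single j j (1 : ℂ) := by
    simpa using (posSemidef_conjTranspose_mul_self (single j j (1 : ℂ))).nonneg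
  rw [traceNorm_eq_re_trace_sqrt, conjTranspose_single, star_one, single_mul_single_same, one_mul,
    CFC.sqrt_unique h_idem h_nonneg]
  simp

lemma one_kronecker_single_mul_sum_mul_one_kronecker_single {R ι : Type*} [CommSemiring R]
    [Fintype ι] [DecidableEq ι] [DecidableEq m] [DecidableEq n]
    (B : ι → ι → Matrix m n R) (i j : ι) :
    ((1 : Matrix m m R) ⊗ₖ single i i (1 : R)) * (∑ k, ∑ l, B k l ⊗ₖ single k l (1 : R)) *
        ((1 : Matrix n n R) ⊗ₖ single j j (1 : R)) = B i j ⊗ₖ single i j (1 : R) := by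
  simp_rw [Matrix.mul_sum, Matrix.sum_mul, ← mul_kronecker_mul, Matrix.one_mul, Matrix.mul_one,
    single_mul_mul_single, one_mul, mul_one, single_apply]
  simp [apply_ite, ite_and]

end

/-- On `ℂ^d ⊗ ℂ^n`, let `P i = 1 ⊗ |i⟩⟨i|` and
`M = ∑ k l, (A k ρ A lᴴ) ⊗ |k⟩⟨l|` (the canonical Naimark embedding). Then for all `i ≠ j`:
`P i * M * P j = (A i ρ A jᴴ) ⊗ |i⟩⟨j|` and `‖P i M P j‖₁ = ‖A i ρ A jᴴ‖₁`; consequently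
`∑_{i ≠ j} ‖P i M P j‖₁ = ∑_{i ≠ j} ‖A i ρ A jᴴ‖₁`. -/
theorem l1_povm_coherence_local_expression
    (n d : ℕ) (ρ : Matrix (Fin d) (Fin d) ℂ)
    (A : Fin n → Matrix (Fin d) (Fin d) ℂ)
    (P : Fin n → Matrix (Fin d × Fin n) (Fin d × Fin n) ℂ)
    (hP : ∀ i, P i = (1 : Matrix (Fin d) (Fin d) ℂ) ⊗ₖ Matrix.single i i (1 : ℂ))
    (M : Matrix (Fin d × Fin n) (Fin d × Fin n) ℂ)
    (hM : M = ∑ k, ∑ l, (A k * ρ * (A l)ᴴ) ⊗ₖ Matrix.single k l (1 : ℂ)) :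
    (∀ i j, i ≠ j →
        P i * M * P j = (A i * ρ * (A j)ᴴ) ⊗ₖ Matrix.single i j (1 : ℂ) ∧
        traceNorm (P i * M * P j) = traceNorm (A i * ρ * (A j)ᴴ)) ∧
      ∑ q ∈ (Finset.univ : Finset (Fin n)).offDiag, traceNorm (P q.1 * M * P q.2)
        = ∑ q ∈ (Finset.univ : Finset (Fin n)).offDiag, traceNorm (A q.1 * ρ * (A q.2)ᴴ) := by
  have h_compress : ∀ i j,
      P i * M * P j = (A i * ρ * (A j)ᴴ) ⊗ₖ Matrix.single i j (1 : ℂ) := fun i j => by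
    rw [hP, hP, hM]
    exact one_kronecker_single_mul_sum_mul_one_kronecker_single (fun k l => A k * ρ * (A l)ᴴ) i j
  have h_traceNorm : ∀ i j, traceNorm (P i * M * P j) = traceNorm (A i * ρ * (A j)ᴴ) :=
    fun i j => by rw [h_compress, traceNorm_kronecker, traceNorm_single_one, mul_one]
  exact ⟨fun i j _ => ⟨h_compress i j, h_traceNorm i j⟩,
    Finset.sum_congr rfl fun q _ => h_traceNorm q.1 q.2⟩
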